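/- arXiv:1502.07906 — 2 statements merged into one kernel-verified Lean document; each statement's English description precedes it below -/
import Mathlib

section
/- With the notation above, the union ⋃_{n≥0} g_n(𝔹^q) equals the set {x ∈ X : Φ_{0,n}(x) ∈ h(𝔹^q) for all sufficiently large n}. -/
/-!
Since `h` semiconjugates `φ n` to `Φ n`, every `Φ n` maps `h(𝔹^q)` into itself, so the sets
`g_n(𝔹^q) = Φ_{0,n}⁻¹(h(𝔹^q))` increase with `n`. The union of an increasing sequence of sets is
the set of points that eventually lie in them.
-/

/-- `comps φ n m = φ (m-1) ∘ ⋯ ∘ φ n` (identity when `m ≤ n`). -/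
def comps {α : Type*} (φ : ℕ → α → α) (n m : ℕ) (x : α) : α :=
  (List.range' n (m - n)).foldl (fun y k => φ k y) x

/-- `compEquiv Φ n = Φ (n-1) ∘ ⋯ ∘ Φ 0` as a bijection. -/
def compEquiv {X : Type*} (Φ : ℕ → X ≃ X) : ℕ → X ≃ X
  | 0 => Equiv.refl X
  | n + 1 => (compEquiv Φ n).trans (Φ n)

open Set Filter

theorem Monotone.iUnion_eq_setOf_eventually_mem {α ι : Type*} [SemilatticeSup ι] [Nonempty ι]
    {s : ι → Set α} (hs : Monotone s) :
    ⋃ i, s i = {x | ∀ᶠ i in atTop, x ∈ s i} := by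
  ext x
  simp only [mem_iUnion, mem_ofPred_eq]
  constructor
  · rintro ⟨i, hx⟩
    exact eventually_atTop.2 ⟨i, fun j hij => hs hij hx⟩
  · exact fun hx => hx.exists

theorem monotone_preimage_compEquiv {X : Type*} {Φ : ℕ → X ≃ X} {S : Set X}
    (hS : ∀ n, MapsTo (Φ n) S S) :
    Monotone fun n => compEquiv Φ n ⁻¹' S :=
  monotone_nat_of_le_succ fun n _ hx => hS n hx

theorem range_compEquiv_symm_comp {X Z : Type*} (Φ : ℕ → X ≃ X) (h : Z → X) (n : ℕ) :
    range (fun z => (compEquiv Φ n).symm (h z)) = compEquiv Φ n ⁻¹' range h := by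
  rw [range_comp', Equiv.image_eq_preimage_symm, Equiv.symm_symm]

theorem stmt5_general (q : ℕ) {X : Type*}
    (φ : ℕ → ↥(Metric.ball (0 : EuclideanSpace ℂ (Fin q)) 1) →
      ↥(Metric.ball (0 : EuclideanSpace ℂ (Fin q)) 1))
    (Φ : ℕ → X ≃ X)
    (h : ↥(Metric.ball (0 : EuclideanSpace ℂ (Fin q)) 1) → X)
    (hcomm : ∀ n, h ∘ φ n = (Φ n) ∘ h) :
    (⋃ n, Set.range (fun z => (compEquiv Φ n).symm (h z))) =
      {x : X | ∀ᶠ n in Filter.atTop, compEquiv Φ n x ∈ Set.range h} := by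
  have hmaps : ∀ n, MapsTo (Φ n) (range h) (range h) := fun n =>
    (Function.semiconj_iff_comp_eq.2 (hcomm n)).mapsTo_range
  simp only [range_compEquiv_symm_comp]
  exact (monotone_preimage_compEquiv hmaps).iUnion_eq_setOf_eventually_mem

/-- With `g_n = Φ_{0,n}⁻¹ ∘ h`, the union `⋃ n, g_n(𝔹^q)` equals the set of points `x`
with `Φ_{0,n}(x) ∈ h(𝔹^q)` for all sufficiently large `n`. -/
theorem stmt5 (q : ℕ) {X : Type*}
    (φ : ℕ → ↥(Metric.ball (0 : EuclideanSpace ℂ (Fin q)) 1) →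
      ↥(Metric.ball (0 : EuclideanSpace ℂ (Fin q)) 1))
    (Φ : ℕ → X ≃ X)
    (h : ↥(Metric.ball (0 : EuclideanSpace ℂ (Fin q)) 1) → X)
    (hinj : Function.Injective h)
    (hcomm : ∀ n, h ∘ φ n = (Φ n) ∘ h) :
    (⋃ n, Set.range (fun z => (compEquiv Φ n).symm (h z))) =
      {x : X | ∀ᶠ n in Filter.atTop, compEquiv Φ n x ∈ Set.range h} :=
  stmt5_general q φ Φ h hcomm
end

section
/- If f : Δ → Δ is holomorphic, f(0) = 0, and σ : Δ → ℂ satisfies the Schröder equation σ ∘ f = f'(0)·σ with σ(0) = 0 and σ'(0) = 1, and 0 < |f'(0)| < 1, then σ is unique: any other holomorphic τ : Δ → ℂ with τ ∘ f = f'(0)·τ, τ(0) = 0, τ'(0) = 1 equals σ. -/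
/-!
For two normalized solutions `σ, τ`, the difference `g = σ - τ` vanishes to order at least two at
`0` and satisfies `g ∘ f = λ g` with `λ = f'(0)`. If `g` had finite order `n`, writing
`g z = z ^ n • h z` with `h 0 ≠ 0` and letting `z → 0` in `(f z / z) ^ n • h (f z) = λ • h z`
gives `λ ^ n = λ`, which forces `n = 1` because `0 < |λ| < 1`. Hence `g` vanishes near `0`, and
on the whole disc by the identity theorem.
-/

open Filter Topology

section

variable {𝕜 E : Type*} [NontriviallyNormedField 𝕜] [NormedAddCommGroup E] [NormedSpace 𝕜 E]

theorem AnalyticAt.pow_analyticOrderAt_eq_self_of_comp_eq_smul {f : 𝕜 → 𝕜} {g : 𝕜 → E}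
    {z₀ lam : 𝕜} {n : ℕ} (hg : AnalyticAt 𝕜 g z₀) (hn : analyticOrderAt g z₀ = n)
    (hf : HasDerivAt f lam z₀) (hfix : f z₀ = z₀)
    (hfg : ∀ᶠ z in 𝓝 z₀, g (f z) = lam • g z) :
    lam ^ n = lam := by
  obtain ⟨h, hha, hh0, hgh⟩ := hg.analyticOrderAt_eq_natCast.mp hn
  have hf_tendsto : Tendsto f (𝓝 z₀) (𝓝 z₀) := by
    simpa only [hfix] using hf.continuousAt.tendsto
  have hfactor : ∀ᶠ z in 𝓝[≠] z₀, slope f z₀ z ^ n • h (f z) = lam • h z := by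
    filter_upwards [self_mem_nhdsWithin, nhdsWithin_le_nhds
      (hfg.and (hgh.and (hf_tendsto.eventually hgh)))] with z hz ⟨hfg, hgz, hgfz⟩
    have hsub : f z - z₀ = (z - z₀) • slope f z₀ z := by rw [sub_smul_slope, vsub_eq_sub, hfix]
    apply smul_right_injective E (pow_ne_zero n (sub_ne_zero.mpr hz))
    dsimp only
    rw [← mul_smul, ← mul_pow, ← smul_eq_mul, ← hsub, ← hgfz, hfg, hgz, smul_comm]
  have hlim_left : Tendsto (fun z ↦ slope f z₀ z ^ n • h (f z)) (𝓝[≠] z₀) (𝓝 (lam ^ n • h z₀)) :=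
    ((hasDerivAt_iff_tendsto_slope.mp hf).pow n).smul
      (hha.continuousAt.tendsto.comp (hf_tendsto.mono_left nhdsWithin_le_nhds))
  have hlim_right : Tendsto (fun z ↦ lam • h z) (𝓝[≠] z₀) (𝓝 (lam • h z₀)) :=
    (hha.continuousAt.tendsto.mono_left nhdsWithin_le_nhds).const_smul lam
  exact smul_left_injective 𝕜 hh0 (tendsto_nhds_unique (hlim_left.congr' hfactor) hlim_right)

theorem eq_one_of_pow_eq_self {lam : 𝕜} {n : ℕ} (h0 : 0 < ‖lam‖) (h1 : ‖lam‖ < 1)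
    (hn : lam ^ n = lam) : n = 1 := by
  have : ‖lam‖ ^ n = ‖lam‖ ^ 1 := by rw [← norm_pow, hn, pow_one]
  exact pow_right_injective₀ h0 h1.ne this

theorem analyticOrderAt_ne_one_of_deriv_eq_zero [CharZero 𝕜] [CompleteSpace E] {g : 𝕜 → E}
    {z₀ : 𝕜} (hg : AnalyticAt 𝕜 g z₀) (hg0 : g z₀ = 0) (hg' : deriv g z₀ = 0) :
    analyticOrderAt g z₀ ≠ 1 := by
  rw [ne_eq, ← zero_add (1 : ℕ∞), ← Nat.cast_zero, analyticOrderAt_deriv_eq_iff hg hg0,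
    Nat.cast_zero, hg.deriv.analyticOrderAt_eq_zero]
  exact not_not.mpr hg'

theorem eventuallyEq_zero_of_comp_eq_smul [CharZero 𝕜] [CompleteSpace E] {f : 𝕜 → 𝕜}
    {g : 𝕜 → E} {z₀ lam : 𝕜} (hg : AnalyticAt 𝕜 g z₀) (hg0 : g z₀ = 0) (hg' : deriv g z₀ = 0)
    (hf : HasDerivAt f lam z₀) (hfix : f z₀ = z₀) (h0 : 0 < ‖lam‖) (h1 : ‖lam‖ < 1)
    (hfg : ∀ᶠ z in 𝓝 z₀, g (f z) = lam • g z) :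
    g =ᶠ[𝓝 z₀] 0 := by
  refine analyticOrderAt_eq_top.mp ?_
  by_contra hfin
  obtain ⟨n, hn⟩ := ENat.ne_top_iff_exists.mp hfin
  have hn1 : n = 1 :=
    eq_one_of_pow_eq_self h0 h1 (hg.pow_analyticOrderAt_eq_self_of_comp_eq_smul hn.symm hf hfix hfg)
  exact analyticOrderAt_ne_one_of_deriv_eq_zero hg hg0 hg' (by rw [← hn, hn1, Nat.cast_one])

end

theorem stmt18_general (f : ℂ → ℂ)
    (hhol : DifferentiableOn ℂ f (Metric.ball 0 1))
    (hfix : f 0 = 0)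
    (hd0 : 0 < ‖deriv f 0‖) (hd1 : ‖deriv f 0‖ < 1)
    (σ τ : ℂ → ℂ)
    (hσhol : DifferentiableOn ℂ σ (Metric.ball 0 1))
    (hτhol : DifferentiableOn ℂ τ (Metric.ball 0 1))
    (hσeq : ∀ z ∈ Metric.ball (0 : ℂ) 1, σ (f z) = deriv f 0 * σ z)
    (hτeq : ∀ z ∈ Metric.ball (0 : ℂ) 1, τ (f z) = deriv f 0 * τ z)
    (hσ0 : σ 0 = 0) (hσ1 : deriv σ 0 = 1)
    (hτ0 : τ 0 = 0) (hτ1 : deriv τ 0 = 1) :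
    Set.EqOn σ τ (Metric.ball 0 1) := by
  have hball : Metric.ball (0 : ℂ) 1 ∈ 𝓝 0 := Metric.ball_mem_nhds 0 one_pos
  have hσa := hσhol.analyticOnNhd Metric.isOpen_ball
  have hτa := hτhol.analyticOnNhd Metric.isOpen_ball
  have hσ0a := hσa 0 (mem_of_mem_nhds hball)
  have hτ0a := hτa 0 (mem_of_mem_nhds hball)
  have hdiff : σ - τ =ᶠ[𝓝 0] 0 := by
    refine eventuallyEq_zero_of_comp_eq_smul (hσ0a.sub hτ0a) (by simp [hσ0, hτ0]) ?_
      (hhol.differentiableAt hball).hasDerivAt hfix hd0 hd1 ?_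
    · rw [deriv_sub hσ0a.differentiableAt hτ0a.differentiableAt, hσ1, hτ1, sub_self]
    · filter_upwards [hball] with z hz
      simp [hσeq z hz, hτeq z hz, mul_sub]
  exact hσa.eqOn_of_preconnected_of_eventuallyEq hτa (convex_ball 0 1).isPreconnected
    (mem_of_mem_nhds hball) (eventuallyEq_iff_sub.mpr hdiff)

/-- Uniqueness of the normalized solution of the Schröder equation: if `f : Δ → Δ` is
holomorphic with `f(0) = 0`, `0 < |f'(0)| < 1`, and `σ, τ` are holomorphic solutions of
`σ ∘ f = f'(0)·σ` on `Δ` with `σ(0) = 0`, `σ'(0) = 1` (and likewise for `τ`), then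
`σ = τ` on `Δ`. -/
theorem stmt18 (f : ℂ → ℂ)
    (hhol : DifferentiableOn ℂ f (Metric.ball 0 1))
    (hmap : Set.MapsTo f (Metric.ball 0 1) (Metric.ball 0 1))
    (hfix : f 0 = 0)
    (hd0 : 0 < ‖deriv f 0‖) (hd1 : ‖deriv f 0‖ < 1)
    (σ τ : ℂ → ℂ)
    (hσhol : DifferentiableOn ℂ σ (Metric.ball 0 1))
    (hτhol : DifferentiableOn ℂ τ (Metric.ball 0 1))
    (hσeq : ∀ z ∈ Metric.ball (0 : ℂ) 1, σ (f z) = deriv f 0 * σ z)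
    (hτeq : ∀ z ∈ Metric.ball (0 : ℂ) 1, τ (f z) = deriv f 0 * τ z)
    (hσ0 : σ 0 = 0) (hσ1 : deriv σ 0 = 1)
    (hτ0 : τ 0 = 0) (hτ1 : deriv τ 0 = 1) :
    Set.EqOn σ τ (Metric.ball 0 1) :=
  stmt18_general f hhol hfix hd0 hd1 σ τ hσhol hτhol hσeq hτeq hσ0 hσ1 hτ0 hτ1
end
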